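/- arXiv:0904.2933 — 2 statements merged into one kernel-verified Lean document; each statement's English description precedes it below -/
import Mathlib

section
/- Let c > 0, e ∈ ℝ, m₀ > 0, let A : ℝ × ℝ³ → ℝ³ and V, ψ : ℝ × ℝ³ → ℝ be C¹ fields, and set φ_l(t,x) = (e/c)A^l(t,x) for l = 1,2,3 and φ_4(t,x) = −(e/c)V(t,x). Let r : ℝ → ℝ³ be a twice differentiable curve with |dr/dt| > c everywhere, write v = dr/dt and Γ(t) = 1/√(|v(t)|²/c² − 1), and let t : ℝ → ℝ be a twice differentiable function satisfying dt/ds = m₀ Γ(t(s)). Define q : ℝ → ℝ⁴ by q(s) = (r(t(s)), c·t(s)). Then q satisfies the constraint q̇⁴(s) = √(−m₀²c² + Σ_{p=1}^{3}(q̇^p(s))²), and q satisfies, for all s and j = 1,2,3, the reduced equations q̈^j = Σ_l q̇^l(∂φ_l/∂q^j − ∂φ_j/∂q^l) + √(−m₀²c² + Σ_p(q̇^p)²)(∂φ_4/∂q^j − ∂φ_j/∂q⁴) − ∂ψ/∂q^j + (q̇^j/(m₀²c²))(Σ_l q̇^l ∂ψ/∂q^l + √(−m₀²c² + Σ_p(q̇^p)²)·∂ψ/∂q⁴)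 if and only if r satisfies, for all t in the range of t(s), the tachyon equations of motion (d/dt)(m₀ Γ v) = F_L + F_C − (1/m₀)√(v²/c² − 1)·grad ψ, where F_L(t) = e((1/c) v × curl A − (1/c)∂A/∂t − grad V) evaluated at (t, r(t)), grad denotes the spatial gradient, and F_C(t) = (1/(m₀c²)) Γ v (dψ/dt) with dψ/dt = ⟨v, grad ψ⟩ + ∂ψ/∂t evaluated along the curve. -/
/-!
Along `q(s) = (r(t(s)), c t(s))` every `s`-derivative is the `t`-derivative times `dt/ds = m₀Γ`.
With `Γ⁻² = v²/c² − 1` this makes `(q̇⁴)² = c²(dt/ds)² = Σ (q̇^p)² − m₀²c²`, which is the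
constraint, and it turns `q̈^j` into `(dt/ds) · d/dt (m₀Γvʲ)`. Substituting `φ`, and rewriting
`Σ_l vˡ(∂ⱼAₗ − ∂ₗAⱼ)` as `(v × curl A)ⱼ`, the right-hand side of the reduced equation is likewise
`dt/ds` times the tachyon force, so the two equations differ by the nonzero factor `dt/ds`.
-/

/-- Spatial partial derivative `∂f/∂x^i` of a field on `ℝ × ℝ³`. -/
noncomputable def pdx (f : ℝ × (Fin 3 → ℝ) → ℝ) (i : Fin 3) (t : ℝ) (x : Fin 3 → ℝ) : ℝ :=
  fderiv ℝ (fun y => f (t, y)) x (Pi.single i 1)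

/-- Time partial derivative `∂f/∂t` of a field on `ℝ × ℝ³`. -/
noncomputable def pdt (f : ℝ × (Fin 3 → ℝ) → ℝ) (t : ℝ) (x : Fin 3 → ℝ) : ℝ :=
  deriv (fun τ => f (τ, x)) t

/-- Cross product on `ℝ³`. -/
def cross (u v : Fin 3 → ℝ) : Fin 3 → ℝ :=
  ![u 1 * v 2 - u 2 * v 1, u 2 * v 0 - u 0 * v 2, u 0 * v 1 - u 1 * v 0]

/-- Curl of a time-dependent vector field on `ℝ³`. -/
noncomputable def curl (A : Fin 3 → ℝ × (Fin 3 → ℝ) → ℝ) (t : ℝ) (x : Fin 3 → ℝ) :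
    Fin 3 → ℝ :=
  ![pdx (A 2) 1 t x - pdx (A 1) 2 t x,
    pdx (A 0) 2 t x - pdx (A 2) 0 t x,
    pdx (A 1) 0 t x - pdx (A 0) 1 t x]

/-- Component `l` of the velocity of a curve in `ℝ³`. -/
noncomputable def v3 (r : ℝ → Fin 3 → ℝ) (l : Fin 3) (t : ℝ) : ℝ :=
  deriv (fun τ => r τ l) t

/-- Component `σ` of the velocity of a curve in `ℝ⁴`. -/
noncomputable def vel (q : ℝ → Fin 4 → ℝ) (σ : Fin 4) (s : ℝ) : ℝ :=
  deriv (fun τ => q τ σ) s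

/-- Component `σ` of the acceleration of a curve in `ℝ⁴`. -/
noncomputable def acc (q : ℝ → Fin 4 → ℝ) (σ : Fin 4) (s : ℝ) : ℝ :=
  deriv (vel q σ) s

open Finset

lemma pdx_const_mul (a : ℝ) (f : ℝ × (Fin 3 → ℝ) → ℝ) (i : Fin 3) (t : ℝ) (x : Fin 3 → ℝ) :
    pdx (fun p => a * f p) i t x = a * pdx f i t x := by
  change fderiv ℝ (a • fun y => f (t, y)) x (Pi.single i 1) = _
  rw [fderiv_const_smul_field]
  rfl

lemma pdt_const_mul (a : ℝ) (f : ℝ × (Fin 3 → ℝ) → ℝ) (t : ℝ) (x : Fin 3 → ℝ) :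
    pdt (fun p => a * f p) t x = a * pdt f t x :=
  congrFun (deriv_const_mul_field' a) t

lemma mul_eq_iff_eq_of_eq_mul {M₀ : Type*} [Mul M₀] [Zero M₀] [IsRightCancelMulZero M₀]
    {D X Y w : M₀} (hw : w ≠ 0) (h : X = Y * w) : D * w = X ↔ D = Y := by
  rw [h, mul_left_inj' hw]

lemma cross_curl_apply (v : Fin 3 → ℝ) (A : Fin 3 → ℝ × (Fin 3 → ℝ) → ℝ) (t : ℝ)
    (x : Fin 3 → ℝ) (j : Fin 3) :
    cross v (curl A t x) j = ∑ l, v l * (pdx (A l) j t x - pdx (A j) l t x) := by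
  fin_cases j <;> simp [cross, curl, Fin.sum_univ_three] <;> ring

noncomputable def invGamma (c : ℝ) (r : ℝ → Fin 3 → ℝ) (t : ℝ) : ℝ :=
  √((∑ p, v3 r p t ^ 2) / c ^ 2 - 1)

section Superluminal

variable {c : ℝ} {r : ℝ → Fin 3 → ℝ} {t : ℝ}

lemma one_lt_sum_v3_sq_div (hc : 0 < c) (hsup : c < √(∑ p, v3 r p t ^ 2)) :
    1 < (∑ p, v3 r p t ^ 2) / c ^ 2 := by
  rw [one_lt_div (by positivity)]
  exact (Real.lt_sqrt hc.le).1 hsup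

lemma invGamma_pos (hc : 0 < c) (hsup : c < √(∑ p, v3 r p t ^ 2)) : 0 < invGamma c r t :=
  Real.sqrt_pos.2 (sub_pos.2 (one_lt_sum_v3_sq_div hc hsup))

lemma invGamma_sq (hc : 0 < c) (hsup : c < √(∑ p, v3 r p t ^ 2)) :
    invGamma c r t ^ 2 = (∑ p, v3 r p t ^ 2) / c ^ 2 - 1 :=
  Real.sq_sqrt (sub_nonneg.2 (one_lt_sum_v3_sq_div hc hsup).le)

lemma differentiableAt_invGamma (hc : 0 < c) (hsup : c < √(∑ p, v3 r p t ^ 2))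
    (hr2 : ∀ p, DifferentiableAt ℝ (v3 r p) t) : DifferentiableAt ℝ (invGamma c r) t := by
  have hsum : DifferentiableAt ℝ (fun τ => ∑ p, v3 r p τ ^ 2) t :=
    DifferentiableAt.fun_sum fun p _ => (hr2 p).pow 2
  exact (hsum.div_const _ |>.sub_const 1).sqrt (sub_pos.2 (one_lt_sum_v3_sq_div hc hsup)).ne'

noncomputable def tachyonMomentum (m₀ c : ℝ) (r : ℝ → Fin 3 → ℝ) (l : Fin 3) (t : ℝ) : ℝ :=
  m₀ * v3 r l t / invGamma c r t

lemma differentiableAt_tachyonMomentum {m₀ : ℝ} {l : Fin 3} (hc : 0 < c)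
    (hsup : c < √(∑ p, v3 r p t ^ 2)) (hr2 : ∀ p, DifferentiableAt ℝ (v3 r p) t) :
    DifferentiableAt ℝ (tachyonMomentum m₀ c r l) t :=
  ((hr2 l).const_mul m₀).div (differentiableAt_invGamma hc hsup hr2) (invGamma_pos hc hsup).ne'

end Superluminal

section SnocCurve

variable {c : ℝ} {r : ℝ → Fin 3 → ℝ} {T : ℝ → ℝ} {q : ℝ → Fin 4 → ℝ}

lemma vel_castSucc_of_snoc (hq : ∀ s, q s = Fin.snoc (r (T s)) (c * T s)) {p : Fin 3} {s : ℝ}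
    (hr : DifferentiableAt ℝ (fun t => r t p) (T s)) (hT : DifferentiableAt ℝ T s) :
    vel q p.castSucc s = v3 r p (T s) * deriv T s := by
  have hqp : (fun τ => q τ p.castSucc) = (fun t => r t p) ∘ T := by
    funext τ
    simp [hq]
  rw [vel, hqp, deriv_comp s hr hT, v3]

lemma vel_last_of_snoc (hq : ∀ s, q s = Fin.snoc (r (T s)) (c * T s)) (s : ℝ) :
    vel q 3 s = c * deriv T s := by
  have hq3 : (fun τ => q τ 3) = fun τ => c * T τ := by
    funext τ
    rw [hq]
    exact Fin.snoc_last _ _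
  rw [vel, hq3, deriv_const_mul_field']

lemma sqrt_neg_sq_add_sum_vel_sq {m₀ s : ℝ} (hc : 0 < c) (hm : 0 < m₀)
    (hsup : c < √(∑ p, v3 r p (T s) ^ 2))
    (hvel : ∀ p, vel q p.castSucc s = v3 r p (T s) * deriv T s)
    (hmass : deriv T s = m₀ / invGamma c r (T s)) :
    √(-(m₀ ^ 2 * c ^ 2) + ∑ p : Fin 3, vel q p.castSucc s ^ 2) = c * deriv T s := by
  have hΓ := invGamma_pos hc hsup
  have hv : ∑ p, v3 r p (T s) ^ 2 = c ^ 2 * (invGamma c r (T s) ^ 2 + 1) := by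
    rw [invGamma_sq hc hsup]
    field_simp
    ring
  have hshell : -(m₀ ^ 2 * c ^ 2) + ∑ p : Fin 3, vel q p.castSucc s ^ 2 = (c * deriv T s) ^ 2 := by
    simp only [hvel, mul_pow, ← sum_mul, hv, hmass]
    field_simp
    ring
  rw [hshell, Real.sqrt_sq (mul_pos hc (hmass ▸ div_pos hm hΓ)).le]

lemma acc_castSucc_of_snoc {m₀ s : ℝ} {j : Fin 3} (hq : ∀ s, q s = Fin.snoc (r (T s)) (c * T s))
    (hr1 : ∀ p, Differentiable ℝ fun t => r t p) (hT : Differentiable ℝ T)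
    (hmass : ∀ s, deriv T s = m₀ / invGamma c r (T s))
    (hP : DifferentiableAt ℝ (tachyonMomentum m₀ c r j) (T s)) :
    acc q j.castSucc s = deriv (tachyonMomentum m₀ c r j) (T s) * deriv T s := by
  have hvel : vel q j.castSucc = tachyonMomentum m₀ c r j ∘ T := by
    funext σ
    rw [vel_castSucc_of_snoc hq (hr1 j _) (hT σ), hmass, Function.comp_apply, tachyonMomentum]
    ring
  rw [acc, hvel, deriv_comp s hP (hT s)]

end SnocCurve

theorem stmt7_general (c e m₀ : ℝ) (hc : 0 < c) (hm : 0 < m₀)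
    (A : Fin 3 → ℝ × (Fin 3 → ℝ) → ℝ) (V ψ : ℝ × (Fin 3 → ℝ) → ℝ)
    (φ : Fin 4 → ℝ × (Fin 3 → ℝ) → ℝ)
    (hφl : ∀ l : Fin 3, ∀ p, φ l.castSucc p = e / c * A l p)
    (hφ4 : ∀ p, φ 3 p = -(e / c) * V p)
    (r : ℝ → Fin 3 → ℝ)
    (hr1 : ∀ l, Differentiable ℝ fun t => r t l)
    (hr2 : ∀ l, Differentiable ℝ (v3 r l))
    (hsup : ∀ t, c < Real.sqrt (∑ p, v3 r p t ^ 2))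
    (T : ℝ → ℝ) (hT1 : Differentiable ℝ T)
    (hmass : ∀ s, deriv T s =
      m₀ / Real.sqrt ((∑ p, v3 r p (T s) ^ 2) / c ^ 2 - 1))
    (q : ℝ → Fin 4 → ℝ)
    (hq : ∀ s, q s = Fin.snoc (r (T s)) (c * T s)) :
    (∀ s, vel q 3 s =
        Real.sqrt (-(m₀ ^ 2 * c ^ 2) + ∑ p : Fin 3, vel q p.castSucc s ^ 2)) ∧
    ((∀ s, ∀ j : Fin 3,
        acc q j.castSucc s =
          (∑ l : Fin 3, vel q l.castSucc s *
              (pdx (φ l.castSucc) j (T s) (r (T s))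
                - pdx (φ j.castSucc) l (T s) (r (T s))))
            + Real.sqrt (-(m₀ ^ 2 * c ^ 2) + ∑ p : Fin 3, vel q p.castSucc s ^ 2) *
                (pdx (φ 3) j (T s) (r (T s))
                  - (1 / c) * pdt (φ j.castSucc) (T s) (r (T s)))
            - pdx ψ j (T s) (r (T s))
            + vel q j.castSucc s / (m₀ ^ 2 * c ^ 2) *
                ((∑ l : Fin 3, vel q l.castSucc s * pdx ψ l (T s) (r (T s)))
                  + Real.sqrt (-(m₀ ^ 2 * c ^ 2) + ∑ p : Fin 3, vel q p.castSucc s ^ 2) *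
                      ((1 / c) * pdt ψ (T s) (r (T s)))))
      ↔
      (∀ t ∈ Set.range T, ∀ l : Fin 3,
        deriv (fun τ => m₀ * v3 r l τ /
            Real.sqrt ((∑ p, v3 r p τ ^ 2) / c ^ 2 - 1)) t =
          e * ((1 / c) * cross (fun i => v3 r i t) (curl A t (r t)) l
              - (1 / c) * pdt (A l) t (r t) - pdx V l t (r t))
          + ((1 / (m₀ * c ^ 2)) *
              (1 / Real.sqrt ((∑ p, v3 r p t ^ 2) / c ^ 2 - 1)) * v3 r l t *
              ((∑ p, v3 r p t * pdx ψ p t (r t)) + pdt ψ t (r t)))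
          - (1 / m₀) * Real.sqrt ((∑ p, v3 r p t ^ 2) / c ^ 2 - 1) *
              pdx ψ l t (r t))) := by
  have hmass' : ∀ s, deriv T s = m₀ / invGamma c r (T s) := hmass
  have hΓ : ∀ t, 0 < invGamma c r t := fun t => invGamma_pos hc (hsup t)
  have hT' : ∀ s, deriv T s ≠ 0 := fun s => (hmass' s ▸ div_pos hm (hΓ (T s))).ne'
  have hvel : ∀ s p, vel q p.castSucc s = v3 r p (T s) * deriv T s :=
    fun s p => vel_castSucc_of_snoc hq (hr1 p _) (hT1 s)
  have hsqrt : ∀ s, √(-(m₀ ^ 2 * c ^ 2) + ∑ p : Fin 3, vel q p.castSucc s ^ 2) = c * deriv T s :=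
    fun s => sqrt_neg_sq_add_sum_vel_sq hc hm (hsup _) (hvel s) (hmass' s)
  refine ⟨fun s => by rw [hsqrt, vel_last_of_snoc hq], ?_⟩
  have hφA : ∀ l : Fin 3, φ l.castSucc = fun p => e / c * A l p := fun l => funext (hφl l)
  have hφV : φ 3 = fun p => -(e / c) * V p := funext hφ4
  rw [Set.forall_mem_range]
  refine forall_congr' fun s => forall_congr' fun j => ?_
  rw [acc_castSucc_of_snoc hq hr1 hT1 hmass'
    (differentiableAt_tachyonMomentum hc (hsup _) fun p => hr2 p _), cross_curl_apply, hsqrt s]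
  simp only [hvel s, hφA, hφV, pdx_const_mul, pdt_const_mul, ← invGamma.eq_1]
  refine mul_eq_iff_eq_of_eq_mul (hT' s) ?_
  have hΓs := (hΓ (T s)).ne'
  rw [hmass' s]
  simp only [Fin.sum_univ_three]
  field_simp
  ring

/-- for a tachyon (negative square of mass `−m₀²`), under the
equation `dt/ds = m₀Γ` with `Γ = 1/√(v²/c²−1)`, the curve
`q(s) = (r(t(s)), c·t(s))` satisfies the constraint, and the reduced
(four-dimensional) equations of motion hold iff the tachyon equations
`(d/dt)(m₀Γv) = F_L + F_C − (1/m₀)√(v²/c²−1)·grad ψ` hold. -/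
theorem stmt7 (c e m₀ : ℝ) (hc : 0 < c) (hm : 0 < m₀)
    (A : Fin 3 → ℝ × (Fin 3 → ℝ) → ℝ) (V ψ : ℝ × (Fin 3 → ℝ) → ℝ)
    (hA : ∀ l, ContDiff ℝ 1 (A l)) (hV : ContDiff ℝ 1 V) (hψ : ContDiff ℝ 1 ψ)
    (φ : Fin 4 → ℝ × (Fin 3 → ℝ) → ℝ)
    (hφl : ∀ l : Fin 3, ∀ p, φ l.castSucc p = e / c * A l p)
    (hφ4 : ∀ p, φ 3 p = -(e / c) * V p)
    (r : ℝ → Fin 3 → ℝ)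
    (hr1 : ∀ l, Differentiable ℝ fun t => r t l)
    (hr2 : ∀ l, Differentiable ℝ (v3 r l))
    (hsup : ∀ t, c < Real.sqrt (∑ p, v3 r p t ^ 2))
    (T : ℝ → ℝ) (hT1 : Differentiable ℝ T) (hT2 : Differentiable ℝ (deriv T))
    (hmass : ∀ s, deriv T s =
      m₀ / Real.sqrt ((∑ p, v3 r p (T s) ^ 2) / c ^ 2 - 1))
    (q : ℝ → Fin 4 → ℝ)
    (hq : ∀ s, q s = Fin.snoc (r (T s)) (c * T s)) :
    (∀ s, vel q 3 s =
        Real.sqrt (-(m₀ ^ 2 * c ^ 2) + ∑ p : Fin 3, vel q p.castSucc s ^ 2)) ∧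
    ((∀ s, ∀ j : Fin 3,
        acc q j.castSucc s =
          (∑ l : Fin 3, vel q l.castSucc s *
              (pdx (φ l.castSucc) j (T s) (r (T s))
                - pdx (φ j.castSucc) l (T s) (r (T s))))
            + Real.sqrt (-(m₀ ^ 2 * c ^ 2) + ∑ p : Fin 3, vel q p.castSucc s ^ 2) *
                (pdx (φ 3) j (T s) (r (T s))
                  - (1 / c) * pdt (φ j.castSucc) (T s) (r (T s)))
            - pdx ψ j (T s) (r (T s))
            + vel q j.castSucc s / (m₀ ^ 2 * c ^ 2) *
                ((∑ l : Fin 3, vel q l.castSucc s * pdx ψ l (T s) (r (T s)))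
                  + Real.sqrt (-(m₀ ^ 2 * c ^ 2) + ∑ p : Fin 3, vel q p.castSucc s ^ 2) *
                      ((1 / c) * pdt ψ (T s) (r (T s)))))
      ↔
      (∀ t ∈ Set.range T, ∀ l : Fin 3,
        deriv (fun τ => m₀ * v3 r l τ /
            Real.sqrt ((∑ p, v3 r p τ ^ 2) / c ^ 2 - 1)) t =
          e * ((1 / c) * cross (fun i => v3 r i t) (curl A t (r t)) l
              - (1 / c) * pdt (A l) t (r t) - pdx V l t (r t))
          + ((1 / (m₀ * c ^ 2)) *
              (1 / Real.sqrt ((∑ p, v3 r p t ^ 2) / c ^ 2 - 1)) * v3 r l t *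
              ((∑ p, v3 r p t * pdx ψ p t (r t)) + pdt ψ t (r t)))
          - (1 / m₀) * Real.sqrt ((∑ p, v3 r p t ^ 2) / c ^ 2 - 1) *
              pdx ψ l t (r t))) :=
  stmt7_general c e m₀ hc hm A V ψ φ hφl hφ4 r hr1 hr2 hsup T hT1 hmass q hq
end

section
/- Let c > 0, m₀ > 0, let ψ : ℝ × ℝ³ → ℝ be a C¹ function, and define μ = ψ/(m₀²c²) and the mass function m̃₀ = m₀·exp(μ). Let r : ℝ → ℝ³ be a twice differentiable curve with |dr/dt| < c everywhere, write v = dr/dt, γ(t) = 1/√(1 − |v(t)|²/c²), and let F_L : ℝ → ℝ³ be any continuous function (the Lorentz force along the curve). Then the following two equations are equivalent (one holds for all t if and only if the other does): (i) (d/dt)(m₀ γ v) = F_L − (1/(m₀c²)) γ v (dψ/dt) − (1/m₀)√(1 − v²/c²)·(grad ψ)(t, r(t)), where dψ/dt = ⟨v, grad ψ⟩ + ∂ψ/∂t evaluated at (t, r(t)); (ii) (d/dt)(m̃₀(t,r(t)) γ v) = (m̃₀(t,r(t))/m₀)·F_L − c²√(1 − v²/c²)·(grad m̃₀)(t, r(t)),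 where grad denotes the spatial gradient. In particular, in absence of the electromagnetic field (F_L = 0) the particle moves as if having the nonconstant rest mass m̃₀, subject to the Dicke force F_D = −c²√(1 − v²/c²)·grad m̃₀. -/
section PartialDerivatives

variable {f : ℝ × (Fin 3 → ℝ) → ℝ} {t : ℝ} {x : Fin 3 → ℝ}

lemma pdt_eq_fderiv (hf : DifferentiableAt ℝ f (t, x)) : pdt f t x = fderiv ℝ f (t, x) (1, 0) :=
  (hf.hasFDerivAt.comp_hasDerivAt t ((hasDerivAt_id t).prodMk (hasDerivAt_const t x))).deriv

lemma hasFDerivAt_slice (hf : DifferentiableAt ℝ f (t, x)) :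
    HasFDerivAt (fun y => f (t, y))
      ((fderiv ℝ f (t, x)).comp (ContinuousLinearMap.inr ℝ ℝ (Fin 3 → ℝ))) x :=
  hf.hasFDerivAt.comp x ((hasFDerivAt_const t x).prodMk (hasFDerivAt_id x))

lemma pdx_eq_fderiv (hf : DifferentiableAt ℝ f (t, x)) (i : Fin 3) :
    pdx f i t x = fderiv ℝ f (t, x) (0, Pi.single i 1) := by
  rw [pdx, (hasFDerivAt_slice hf).fderiv]
  rfl

lemma pdx_comp {g : ℝ → ℝ} {g' : ℝ} (hg : HasDerivAt g g' (f (t, x)))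
    (hf : DifferentiableAt ℝ f (t, x)) (i : Fin 3) :
    pdx (fun p => g (f p)) i t x = g' * pdx f i t x := by
  rw [pdx, pdx, show (fun y => g (f (t, y))) = g ∘ fun y => f (t, y) from rfl,
    (hg.comp_hasFDerivAt x (hasFDerivAt_slice hf)).fderiv, (hasFDerivAt_slice hf).fderiv]
  rfl

lemma fderiv_apply_one_eq (hf : DifferentiableAt ℝ f (t, x)) (v : Fin 3 → ℝ) :
    fderiv ℝ f (t, x) (1, v) = (∑ p, v p * pdx f p t x) + pdt f t x := by
  have hv : ((1 : ℝ), v) = (1, 0) + ∑ p, v p • ((0 : ℝ), (Pi.single p 1 : Fin 3 → ℝ)) := by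
    ext j <;> simp [Prod.fst_sum, Prod.snd_sum, Pi.single_apply]
  simp only [hv, map_add, map_sum, map_smul, smul_eq_mul, pdt_eq_fderiv hf, pdx_eq_fderiv hf]
  ring

end PartialDerivatives

lemma hasDerivAt_comp_trajectory {f : ℝ × (Fin 3 → ℝ) → ℝ} {r : ℝ → Fin 3 → ℝ} {t : ℝ}
    (hf : DifferentiableAt ℝ f (t, r t)) (hr : ∀ l, DifferentiableAt ℝ (fun τ => r τ l) t) :
    HasDerivAt (fun τ => f (τ, r τ)) ((∑ p, v3 r p t * pdx f p t (r t)) + pdt f t (r t)) t := by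
  have hcurve : HasDerivAt (fun τ => (τ, r τ)) (1, fun p => v3 r p t) t :=
    (hasDerivAt_id t).prodMk (hasDerivAt_pi.2 fun p => (hr p).hasDerivAt)
  rw [← fderiv_apply_one_eq hf]
  exact hf.hasFDerivAt.comp_hasDerivAt t hcurve

lemma one_sub_div_sq_pos {S c : ℝ} (h : √S < c) : 0 < 1 - S / c ^ 2 := by
  have hc : 0 < c := (Real.sqrt_nonneg S).trans_lt h
  rw [sub_pos, div_lt_one (by positivity)]
  exact (Real.sqrt_lt' hc).1 h

lemma eq_iff_of_sub_eq_mul_sub {a b a' b' X : ℝ} (hX : X ≠ 0) (h : a' - b' = X * (a - b)) :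
    a = b ↔ a' = b' := by
  rw [← sub_eq_zero, ← sub_eq_zero (a := a'), h, mul_eq_zero, or_iff_right hX]

theorem deriv_momentum_eq_iff_dicke {c m₀ : ℝ} (hm : m₀ ≠ 0) {ψ : ℝ × (Fin 3 → ℝ) → ℝ}
    {r : ℝ → Fin 3 → ℝ} {t : ℝ} (hψ : DifferentiableAt ℝ ψ (t, r t))
    (hr : ∀ l, DifferentiableAt ℝ (fun τ => r τ l) t) (hv : ∀ l, DifferentiableAt ℝ (v3 r l) t)
    (hsub : √(∑ p, v3 r p t ^ 2) < c) (F : ℝ) (l : Fin 3) :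
    deriv (fun τ => m₀ * v3 r l τ / √(1 - (∑ p, v3 r p τ ^ 2) / c ^ 2)) t =
        F - (1 / (m₀ * c ^ 2)) * (1 / √(1 - (∑ p, v3 r p t ^ 2) / c ^ 2)) * v3 r l t *
            ((∑ p, v3 r p t * pdx ψ p t (r t)) + pdt ψ t (r t))
          - (1 / m₀) * √(1 - (∑ p, v3 r p t ^ 2) / c ^ 2) * pdx ψ l t (r t) ↔
      deriv (fun τ => m₀ * Real.exp (ψ (τ, r τ) / (m₀ ^ 2 * c ^ 2)) * v3 r l τ /
          √(1 - (∑ p, v3 r p τ ^ 2) / c ^ 2)) t =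
        m₀ * Real.exp (ψ (t, r t) / (m₀ ^ 2 * c ^ 2)) / m₀ * F
          - c ^ 2 * √(1 - (∑ p, v3 r p t ^ 2) / c ^ 2) *
            pdx (fun p => m₀ * Real.exp (ψ p / (m₀ ^ 2 * c ^ 2))) l t (r t) := by
  have hpos : 0 < 1 - (∑ p, v3 r p t ^ 2) / c ^ 2 := one_sub_div_sq_pos hsub
  have hc : c ≠ 0 := ((Real.sqrt_nonneg _).trans_lt hsub).ne'
  set k := m₀ ^ 2 * c ^ 2
  set G := √(1 - (∑ p, v3 r p t ^ 2) / c ^ 2)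
  have hG : G ≠ 0 := (Real.sqrt_pos.2 hpos).ne'
  have hGd : DifferentiableAt ℝ (fun τ => √(1 - (∑ p, v3 r p τ ^ 2) / c ^ 2)) t :=
    ((differentiableAt_const _).sub
      ((DifferentiableAt.fun_sum fun p _ => (hv p).pow 2).div_const _)).sqrt hpos.ne'
  obtain ⟨D, hD⟩ :
      ∃ D, HasDerivAt (fun τ => v3 r l τ / √(1 - (∑ p, v3 r p τ ^ 2) / c ^ 2)) D t :=
    ⟨_, ((hv l).div hGd hG).hasDerivAt⟩
  set Dψ := (∑ p, v3 r p t * pdx ψ p t (r t)) + pdt ψ t (r t)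
  set X := Real.exp (ψ (t, r t) / k)
  have hX : X ≠ 0 := (Real.exp_pos _).ne'
  have hmass : HasDerivAt (fun s => m₀ * Real.exp (s / k)) (m₀ * (X * (1 / k))) (ψ (t, r t)) :=
    (((hasDerivAt_id _).div_const k).exp).const_mul m₀
  have hmomentum : deriv (fun τ => m₀ * v3 r l τ / √(1 - (∑ p, v3 r p τ ^ 2) / c ^ 2)) t =
      m₀ * D := by
    simp_rw [mul_div_assoc]
    exact (hD.const_mul m₀).deriv
  have hdicke : deriv (fun τ => m₀ * Real.exp (ψ (τ, r τ) / k) * v3 r l τ /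
      √(1 - (∑ p, v3 r p τ ^ 2) / c ^ 2)) t =
        m₀ * (X * (1 / k)) * Dψ * (v3 r l t / G) + m₀ * X * D := by
    simp_rw [mul_div_assoc _ (v3 r l _)]
    exact ((hmass.comp t (hasDerivAt_comp_trajectory hψ hr)).mul hD).deriv
  rw [hmomentum, hdicke, pdx_comp hmass hψ]
  refine eq_iff_of_sub_eq_mul_sub hX ?_
  simp only [k]
  field_simp
  ring

theorem stmt10_general (c m₀ : ℝ) (hm : 0 < m₀)
    (ψ : ℝ × (Fin 3 → ℝ) → ℝ) (hψ : ContDiff ℝ 1 ψ)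
    (mt : ℝ × (Fin 3 → ℝ) → ℝ)
    (hmt : ∀ p, mt p = m₀ * Real.exp (ψ p / (m₀ ^ 2 * c ^ 2)))
    (r : ℝ → Fin 3 → ℝ)
    (hr1 : ∀ l, Differentiable ℝ fun t => r t l)
    (hr2 : ∀ l, Differentiable ℝ (v3 r l))
    (hsub : ∀ t, Real.sqrt (∑ p, v3 r p t ^ 2) < c)
    (FL : ℝ → Fin 3 → ℝ) :
    (∀ t, ∀ l : Fin 3,
        deriv (fun τ => m₀ * v3 r l τ /
            Real.sqrt (1 - (∑ p, v3 r p τ ^ 2) / c ^ 2)) t =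
          FL t l
          - (1 / (m₀ * c ^ 2)) *
              (1 / Real.sqrt (1 - (∑ p, v3 r p t ^ 2) / c ^ 2)) * v3 r l t *
              ((∑ p, v3 r p t * pdx ψ p t (r t)) + pdt ψ t (r t))
          - (1 / m₀) * Real.sqrt (1 - (∑ p, v3 r p t ^ 2) / c ^ 2) *
              pdx ψ l t (r t))
    ↔
    (∀ t, ∀ l : Fin 3,
        deriv (fun τ => mt (τ, r τ) * v3 r l τ /
            Real.sqrt (1 - (∑ p, v3 r p τ ^ 2) / c ^ 2)) t =
          mt (t, r t) / m₀ * FL t l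
          - c ^ 2 * Real.sqrt (1 - (∑ p, v3 r p t ^ 2) / c ^ 2) *
              pdx mt l t (r t)) := by
  obtain rfl : mt = fun p => m₀ * Real.exp (ψ p / (m₀ ^ 2 * c ^ 2)) := funext hmt
  have hψd := hψ.differentiable one_ne_zero
  exact forall_congr' fun t => forall_congr' fun l =>
    deriv_momentum_eq_iff_dicke hm.ne' (hψd _) (fun l => hr1 l t) (fun l => hr2 l t) (hsub t)
      (FL t l) l

/-- with the mass function `m̃₀ = m₀·exp(ψ/(m₀²c²))`, the equation of
motion `(d/dt)(m₀γv) = F_L + F_C − (1/m₀)√(1−v²/c²)·grad ψ` is equivalent to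
`(d/dt)(m̃₀γv) = (m̃₀/m₀)·F_L − c²√(1−v²/c²)·grad m̃₀` (Dicke force form). -/
theorem stmt10 (c m₀ : ℝ) (hc : 0 < c) (hm : 0 < m₀)
    (ψ : ℝ × (Fin 3 → ℝ) → ℝ) (hψ : ContDiff ℝ 1 ψ)
    (mt : ℝ × (Fin 3 → ℝ) → ℝ)
    (hmt : ∀ p, mt p = m₀ * Real.exp (ψ p / (m₀ ^ 2 * c ^ 2)))
    (r : ℝ → Fin 3 → ℝ)
    (hr1 : ∀ l, Differentiable ℝ fun t => r t l)
    (hr2 : ∀ l, Differentiable ℝ (v3 r l))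
    (hsub : ∀ t, Real.sqrt (∑ p, v3 r p t ^ 2) < c)
    (FL : ℝ → Fin 3 → ℝ) (hFL : Continuous FL) :
    (∀ t, ∀ l : Fin 3,
        deriv (fun τ => m₀ * v3 r l τ /
            Real.sqrt (1 - (∑ p, v3 r p τ ^ 2) / c ^ 2)) t =
          FL t l
          - (1 / (m₀ * c ^ 2)) *
              (1 / Real.sqrt (1 - (∑ p, v3 r p t ^ 2) / c ^ 2)) * v3 r l t *
              ((∑ p, v3 r p t * pdx ψ p t (r t)) + pdt ψ t (r t))
          - (1 / m₀) * Real.sqrt (1 - (∑ p, v3 r p t ^ 2) / c ^ 2) *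
              pdx ψ l t (r t))
    ↔
    (∀ t, ∀ l : Fin 3,
        deriv (fun τ => mt (τ, r τ) * v3 r l τ /
            Real.sqrt (1 - (∑ p, v3 r p τ ^ 2) / c ^ 2)) t =
          mt (t, r t) / m₀ * FL t l
          - c ^ 2 * Real.sqrt (1 - (∑ p, v3 r p t ^ 2) / c ^ 2) *
              pdx mt l t (r t)) :=
  stmt10_general c m₀ hm ψ hψ mt hmt r hr1 hr2 hsub FL
end
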